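/- Let p be an odd prime. Then the number of t ∈ ℤ/pℤ satisfying (t(t−1)/p) = ((1−t)/p) = −1 is at least (p−5)/4. -/

import Mathlib

/-!
Write `χ` for the quadratic character. For `t ∉ {0, 1}` both `χ (t * (t - 1))` and `χ (1 - t)`
are `±1`, so `(1 - χ (t * (t - 1))) * (1 - χ (1 - t))` is `4` when both equal `-1` and `0`
otherwise; the term at `t = 1` is `1` and the one at `t = 0` vanishes. Summing over `t` and
evaluating the three character sums that appear (one is the Jacobi sum `J(χ, χ) = -χ(-1)`) gives
the exact count `4 N = p - χ(-1) ≥ p - 1` for the number `N` of such `t`.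
-/

def legSym (p : ℕ) [Fact p.Prime] (a : ZMod p) : ℤ := legendreSym p a.val

open Finset

section QuadraticChar

variable {F : Type*} [Field F] [Fintype F] [DecidableEq F]

lemma quadraticChar_sum_one_sub (hF : ringChar F ≠ 2) :
    ∑ t : F, quadraticChar F (1 - t) = 0 := by
  rw [← quadraticChar_sum_zero hF]
  exact Fintype.sum_equiv (Equiv.subLeft 1) _ _ fun _ ↦ rfl

lemma jacobiSum_quadraticChar_self (hF : ringChar F ≠ 2) :
    jacobiSum (quadraticChar F) (quadraticChar F) = -quadraticChar F (-1) := by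
  nth_rw 2 [← (quadraticChar_isQuadratic F).inv]
  exact jacobiSum_nontrivial_inv (quadraticChar_ne_one hF)

lemma quadraticChar_sum_mul_sub_one (hF : ringChar F ≠ 2) :
    ∑ t : F, quadraticChar F (t * (t - 1)) = -1 := by
  have hsplit (t : F) : quadraticChar F (t * (t - 1)) =
      quadraticChar F (-1) * (quadraticChar F t * quadraticChar F (1 - t)) := by
    rw [← map_mul, ← map_mul]
    ring_nf
  simp_rw [hsplit, ← mul_sum]
  rw [← jacobiSum, jacobiSum_quadraticChar_self hF, mul_neg, ← sq,
    quadraticChar_sq_one (neg_ne_zero.mpr one_ne_zero)]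

lemma quadraticChar_sum_mul_sub_one_mul_one_sub (hF : ringChar F ≠ 2) :
    ∑ t : F, quadraticChar F (t * (t - 1)) * quadraticChar F (1 - t) = -quadraticChar F (-1) := by
  have hterm : ∀ t ∈ univ.erase (1 : F),
      quadraticChar F (t * (t - 1)) * quadraticChar F (1 - t) =
        quadraticChar F (-1) * quadraticChar F t := by
    intro t ht
    have hne : t - 1 ≠ 0 := sub_ne_zero.mpr (ne_of_mem_erase ht)
    rw [← map_mul, ← map_mul, show t * (t - 1) * (1 - t) = -1 * t * (t - 1) ^ 2 by ring,
      map_mul, quadraticChar_sq_one' hne, mul_one]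
  rw [← sum_erase_add _ _ (mem_univ 1), sum_congr rfl hterm, ← mul_sum,
    sum_erase_eq_sub (mem_univ 1), quadraticChar_sum_zero hF]
  simp

lemma one_sub_quadraticChar_mul_one_sub_quadraticChar (t : F) :
    (1 - quadraticChar F (t * (t - 1))) * (1 - quadraticChar F (1 - t)) =
      4 * (if quadraticChar F (t * (t - 1)) = -1 ∧ quadraticChar F (1 - t) = -1 then 1 else 0) +
        if t = 1 then 1 else 0 := by
  obtain rfl | h1 := eq_or_ne t 1
  · simp
  obtain rfl | h0 := eq_or_ne t 0
  · simp
  rcases quadraticChar_dichotomy (mul_ne_zero h0 (sub_ne_zero.mpr h1)) with ha | ha <;>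
  rcases quadraticChar_dichotomy (sub_ne_zero.mpr h1.symm) with hb | hb <;>
  simp [ha, hb, h1]

theorem four_mul_card_filter_quadraticChar (hF : ringChar F ≠ 2) :
    4 * (#{t : F | quadraticChar F (t * (t - 1)) = -1 ∧ quadraticChar F (1 - t) = -1} : ℤ) =
      Fintype.card F - quadraticChar F (-1) := by
  have hsum := sum_congr rfl fun t (_ : t ∈ univ) ↦
    one_sub_quadraticChar_mul_one_sub_quadraticChar (F := F) t
  have hexpand (t : F) : (1 - quadraticChar F (t * (t - 1))) * (1 - quadraticChar F (1 - t)) =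
      1 - quadraticChar F (t * (t - 1)) - quadraticChar F (1 - t) +
        quadraticChar F (t * (t - 1)) * quadraticChar F (1 - t) := by ring
  simp only [hexpand, sum_add_distrib, sum_sub_distrib, ← mul_sum, sum_boole, filter_eq',
    mem_univ, if_true, card_singleton, Nat.cast_one, sum_const, card_univ, nsmul_eq_mul, mul_one,
    quadraticChar_sum_mul_sub_one hF, quadraticChar_sum_one_sub hF,
    quadraticChar_sum_mul_sub_one_mul_one_sub hF] at hsum
  linarith

end QuadraticChar

lemma legSym_eq_quadraticChar (p : ℕ) [Fact p.Prime] (a : ZMod p) :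
    legSym p a = quadraticChar (ZMod p) a := by
  simp [legSym, legendreSym]

theorem count_t_ge (p : ℕ) [Fact p.Prime] (hp : p ≠ 2) :
    ((p : ℝ) - 5) / 4 ≤
      ((Finset.univ.filter
        (fun t : ZMod p => legSym p (t * (t - 1)) = -1 ∧ legSym p (1 - t) = -1)).card : ℝ) := by
  have hcount := four_mul_card_filter_quadraticChar (F := ZMod p) (by rwa [ZMod.ringChar_zmod_n])
  have hneg_one : quadraticChar (ZMod p) (-1) ≤ 1 := by
    rcases quadraticChar_dichotomy (neg_ne_zero.mpr (one_ne_zero (α := ZMod p))) with h | h <;>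
      simp [h]
  simp only [legSym_eq_quadraticChar]
  rw [ZMod.card] at hcount
  generalize #_ = N at hcount ⊢
  rw [div_le_iff₀ (by norm_num), mul_comm]
  exact_mod_cast (by linarith : (p : ℤ) - 5 ≤ 4 * N)
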